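/- For each k ∈ ℕ, let D_k : Ω_k × [0,∞) → ℝ be a jointly measurable process on a probability space (Ω_k, F_k, P_k) such that D_k(·, t) is integrable for every t, t ↦ E[D_k(·, t)] is continuous, and for every t ≥ 0, almost surely D_k(t) = D_k(0) + ∫₀^t E[D_k(s)] ds. Assume D_k(0) ≥ 0 almost surely and E[D_k(0)] = 1 for every k. Then for every t > 0 and every ε with 0 < ε < e^t − 1, P_k(|D_k(t)| > ε) = 1 for every k. In particular, even if D_k(·, 0) → 0 in probability as k → ∞ (which is compatible with E[D_k(0)] = 1, e.g. D_k(0) = k·1_{[0,1/k]} on [0,1] with Lebesgue measure), the random variables D_k(·, t) do not converge to 0 in probability for any t > 0. -/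
import Mathlib


open MeasureTheory

/-- Counterexample to convergence in probability for McKean–Vlasov SDEs: if each `D k` solves
the mean-field integral equation `D_k(t) = D_k(0) + ∫₀ᵗ E[D_k(s)] ds` a.s. (with integrable
values and continuous mean), `D_k(0) ≥ 0` a.s., and `E[D_k(0)] = 1`, then for every `t > 0`
and `0 < ε < eᵗ - 1` one has `P_k(|D_k(t)| > ε) = 1` for every `k`. -/
theorem stmt7 (Ω : ℕ → Type*) [∀ k, MeasurableSpace (Ω k)]
    (P : ∀ k, Measure (Ω k)) [∀ k, IsProbabilityMeasure (P k)]
    (D : ∀ k, ℝ → Ω k → ℝ)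
    (hmeas : ∀ k, Measurable (fun p : Set.Ici (0:ℝ) × Ω k => D k p.1.1 p.2))
    (hint : ∀ k, ∀ t : ℝ, 0 ≤ t → Integrable (D k t) (P k))
    (hcont : ∀ k, ContinuousOn (fun t => ∫ ω, D k t ω ∂(P k)) (Set.Ici 0))
    (heq : ∀ k, ∀ t : ℝ, 0 ≤ t →
      ∀ᵐ ω ∂(P k), D k t ω = D k 0 ω + ∫ s in (0:ℝ)..t, ∫ ω', D k s ω' ∂(P k))
    (hpos : ∀ k, ∀ᵐ ω ∂(P k), 0 ≤ D k 0 ω)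
    (hmean : ∀ k, ∫ ω, D k 0 ω ∂(P k) = 1) :
    ∀ t : ℝ, 0 < t → ∀ ε : ℝ, 0 < ε → ε < Real.exp t - 1 →
      ∀ k, P k {ω | ε < |D k t ω|} = 1 := by
  intro t ht ε hε hεt k
  set m : ℝ → ℝ := fun s => ∫ ω, D k s ω ∂(P k) with hm
  -- Step 1: the mean satisfies the integral equation
  have hmeq : ∀ s : ℝ, 0 ≤ s → m s = 1 + ∫ u in (0:ℝ)..s, m u := by
    intro s hs
    have h1 : m s = ∫ ω, (D k 0 ω + ∫ u in (0:ℝ)..s, m u) ∂(P k) :=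
      integral_congr_ae (heq k s hs)
    rw [h1, integral_add (hint k 0 le_rfl) (integrable_const _), hmean k,
      integral_const]
    simp
  -- Step 2: extended continuous mean
  set m' : ℝ → ℝ := fun s => m (max s 0) with hm'
  have hcm' : Continuous m' := by
    apply (hcont k).comp_continuous (continuous_id.max continuous_const)
    intro x; exact Set.mem_Ici.2 (le_max_right _ _)
  have hint_eq : ∀ s : ℝ, 0 ≤ s → (∫ u in (0:ℝ)..s, m u) = ∫ u in (0:ℝ)..s, m' u := by
    intro s hs
    apply intervalIntegral.integral_congr
    intro u hu
    rw [Set.uIcc_of_le hs] at hu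
    simp [hm', max_eq_left hu.1]
  set F : ℝ → ℝ := fun s => 1 + ∫ u in (0:ℝ)..s, m' u with hF
  have hFm : ∀ s : ℝ, 0 ≤ s → F s = m s := by
    intro s hs
    rw [hF]; dsimp only
    rw [← hint_eq s hs, ← hmeq s hs]
  have hF' : ∀ s : ℝ, HasDerivAt F (m' s) s := by
    intro s
    have := intervalIntegral.integral_hasDerivAt_right
      (hcm'.intervalIntegrable 0 s)
      (hcm'.stronglyMeasurable.stronglyMeasurableAtFilter)
      hcm'.continuousAt
    exact (this.const_add 1)
  -- Step 3: F = exp on [0, t]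
  have hFexp : ∀ s ∈ Set.Icc (0:ℝ) t, F s = Real.exp s := by
    apply ODE_solution_unique (v := fun _ x => x) (K := 1)
      (fun _ => LipschitzWith.id)
    · exact fun s _ => (hF' s).continuousAt.continuousWithinAt
    · intro s hs
      have : m' s = F s := by
        rw [hFm s hs.1]; simp [hm', max_eq_left hs.1]
      exact (this ▸ (hF' s)).hasDerivWithinAt
    · exact fun s _ => (Real.continuous_exp.continuousAt).continuousWithinAt
    · exact fun s hs => (Real.hasDerivAt_exp s).hasDerivWithinAt
    · rw [hF]; simp
  -- Step 4: the integral term equals exp t - 1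
  have hI : (∫ u in (0:ℝ)..t, m u) = Real.exp t - 1 := by
    have := hFexp t ⟨le_of_lt ht, le_rfl⟩
    rw [hF] at this; dsimp only at this
    rw [hint_eq t ht.le]; linarith
  -- Step 5: a.s. D k t ω ≥ exp t - 1 > ε
  have hae : ∀ᵐ ω ∂(P k), ε < |D k t ω| := by
    filter_upwards [heq k t ht.le, hpos k] with ω h1 h2
    rw [h1, hI]
    have : ε < D k 0 ω + (Real.exp t - 1) := by linarith
    calc ε < D k 0 ω + (Real.exp t - 1) := this
    _ ≤ |D k 0 ω + (Real.exp t - 1)| := le_abs_self _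
  -- Step 6: conclude measure one
  have hc : P k {ω | ε < |D k t ω|}ᶜ = 0 := by
    rw [Set.compl_setOf]
    exact MeasureTheory.ae_iff.mp hae
  refine le_antisymm prob_le_one ?_
  calc (1 : ENNReal) = P k Set.univ := (measure_univ).symm
    _ ≤ P k {ω | ε < |D k t ω|} + P k {ω | ε < |D k t ω|}ᶜ := by
        rw [← Set.union_compl_self {ω | ε < |D k t ω|}]
        exact measure_union_le _ _
    _ = P k {ω | ε < |D k t ω|} := by rw [hc, add_zero]
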